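/- Fix an integer n ≥ 1. For each integer m ≥ 1 let q(m) be the unique natural number k such that binom(k−1+n, n) < m ≤ binom(k+n, n) (with the convention binom(n−1, n) = 0), and set Q(m) = q(1) + q(2) + ⋯ + q(m). Then for every m ≥ 1, Q(m) ≥ (n!)^{1/n} · (n/(n+1)) · m^{(n+1)/n} − ((n+3)/(2n+2)) · n · m. -/

import Mathlib

/-!
Since `i ≤ C(q(i) + n, n)`, we get `n! · i ≤ (q(i) + 1) ⋯ (q(i) + n) ≤ (q(i) + (n + 1) / 2) ^ n` by
AM–GM, i.e. `q(i) ≥ (n! · i) ^ (1/n) - (n + 1) / 2`. Summing over `i ≤ m` and comparing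
`∑ i ^ (1/n)` with `∫₀^m x ^ (1/n) dx = n / (n + 1) · m ^ ((n + 1) / n)` gives the bound, as
`(n + 1) / 2 ≤ n (n + 3) / (2n + 2)`.
-/

open Finset Real Nat

lemma prod_range_add_le_pow {x : ℝ} (hx : 0 ≤ x) (n : ℕ) :
    ∏ j ∈ range n, (x + j) ≤ (x + (n - 1) / 2) ^ n := by
  rcases n.eq_zero_or_pos with rfl | hn
  · simp
  have hn' : (1 : ℝ) ≤ n := by exact_mod_cast hn
  refine (abs_le_of_sq_le_sq' ?_ (by positivity)).2
  -- pair the factors `x + j` and `x + (n - 1 - j)`, whose arithmetic mean is `x + (n - 1) / 2`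
  calc (∏ j ∈ range n, (x + j)) ^ 2
      = ∏ j ∈ range n, (x + j) * (x + (n - 1 - j : ℕ)) := by
        rw [sq, prod_mul_distrib, prod_range_reflect (fun j => x + (j : ℝ)) n]
    _ ≤ ∏ _j ∈ range n, (x + (n - 1) / 2) ^ 2 := by
        refine prod_le_prod (fun j _ => by positivity) fun j hj => ?_
        have hj : j + 1 ≤ n := mem_range.mp hj
        have hcast : ((n - 1 - j : ℕ) : ℝ) = n - 1 - j := by
          rw [Nat.cast_sub (by omega), Nat.cast_sub hn]; simp
        rw [hcast]
        nlinarith [sq_nonneg ((n - 1) / 2 - (j : ℝ))]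
    _ = ((x + (n - 1) / 2) ^ n) ^ 2 := by
        rw [prod_const, card_range, ← pow_mul, ← pow_mul, mul_comm]

lemma factorial_mul_choose_le_pow (k n : ℕ) :
    (n ! * (k + n).choose n : ℝ) ≤ (k + (n + 1) / 2) ^ n := by
  have h := prod_range_add_le_pow (x := (k : ℝ) + 1) (by positivity) n
  rw [← Nat.cast_mul, ← Nat.ascFactorial_eq_factorial_mul_choose, Nat.ascFactorial_eq_prod_range]
  push_cast
  convert h using 2; ring

lemma factorial_mul_rpow_le {n i k : ℕ} (hn : n ≠ 0) (hi : i ≤ (k + n).choose n) :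
    (n ! * i : ℝ) ^ ((1 : ℝ) / n) ≤ k + (n + 1) / 2 := by
  have h : (n ! * i : ℝ) ≤ (k + (n + 1) / 2) ^ n :=
    (mul_le_mul_of_nonneg_left (by exact_mod_cast hi) (by positivity)).trans
      (factorial_mul_choose_le_pow k n)
  calc (n ! * i : ℝ) ^ ((1 : ℝ) / n) ≤ ((k + (n + 1) / 2) ^ n) ^ ((1 : ℝ) / n) :=
        rpow_le_rpow (by positivity) h (by positivity)
    _ = k + (n + 1) / 2 := by rw [one_div, pow_rpow_inv_natCast (by positivity) hn]

lemma rpow_add_one_le_mul_sum_rpow {s : ℝ} (hs : 0 ≤ s) (m : ℕ) :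
    (m : ℝ) ^ (s + 1) ≤ (s + 1) * ∑ i ∈ Icc 1 m, (i : ℝ) ^ s := by
  have hmono : MonotoneOn (fun x : ℝ => x ^ s) (Set.Icc 0 (0 + m)) :=
    fun x hx y _ hxy => rpow_le_rpow hx.1 hxy hs
  have h := hmono.integral_le_sum
  rw [zero_add, integral_rpow (Or.inl (by linarith)), zero_rpow (by linarith), sub_zero,
    div_le_iff₀ (by linarith)] at h
  have hsum : ∑ i ∈ range m, (0 + ((i + 1 : ℕ) : ℝ)) ^ s = ∑ i ∈ Icc 1 m, (i : ℝ) ^ s := by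
    rw [← Ico_add_one_right_eq_Icc, sum_Ico_eq_sum_range]
    simp [add_comm]
  rwa [hsum, mul_comm] at h

lemma div_add_one_mul_rpow_le_sum_rpow_one_div {n : ℕ} (hn : n ≠ 0) (m : ℕ) :
    (n / (n + 1) : ℝ) * m ^ (((n : ℝ) + 1) / n) ≤ ∑ i ∈ Icc 1 m, (i : ℝ) ^ ((1 : ℝ) / n) := by
  have hexp : (1 : ℝ) / n + 1 = (n + 1) / n := by field_simp; ring
  have h := rpow_add_one_le_mul_sum_rpow (s := (1 : ℝ) / n) (by positivity) m
  rw [hexp] at h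
  calc _ ≤ (n / (n + 1) : ℝ) * ((n + 1) / n * ∑ i ∈ Icc 1 m, (i : ℝ) ^ ((1 : ℝ) / n)) := by
        gcongr
    _ = _ := by field_simp

theorem hilbert_samuel_sum_lower_bound (n : ℕ) (hn : 1 ≤ n) (q : ℕ → ℕ)
    (hq : ∀ m : ℕ, 1 ≤ m →
      m ≤ (q m + n).choose n ∧ ∀ k : ℕ, m ≤ (k + n).choose n → q m ≤ k)
    (Q : ℕ → ℕ) (hQ : ∀ m : ℕ, Q m = ∑ i ∈ Finset.Icc 1 m, q i) :
    ∀ m : ℕ, 1 ≤ m →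
      (n.factorial : ℝ) ^ ((1 : ℝ) / n) * ((n : ℝ) / ((n : ℝ) + 1)) *
          (m : ℝ) ^ (((n : ℝ) + 1) / n)
        - (((n : ℝ) + 3) / (2 * (n : ℝ) + 2)) * (n : ℝ) * (m : ℝ) ≤ (Q m : ℝ) := by
  intro m _
  have hn' : (1 : ℝ) ≤ n := by exact_mod_cast hn
  have hsum : (n ! : ℝ) ^ ((1 : ℝ) / n) * ((n / (n + 1) : ℝ) * m ^ (((n : ℝ) + 1) / n))
      ≤ Q m + (n + 1) / 2 * m :=
    calc _ ≤ (n ! : ℝ) ^ ((1 : ℝ) / n) * ∑ i ∈ Icc 1 m, (i : ℝ) ^ ((1 : ℝ) / n) := by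
          gcongr; exact div_add_one_mul_rpow_le_sum_rpow_one_div (by omega) m
      _ = ∑ i ∈ Icc 1 m, (n ! * i : ℝ) ^ ((1 : ℝ) / n) := by
        rw [mul_sum]
        exact sum_congr rfl fun i _ => (mul_rpow (by positivity) (by positivity)).symm
      _ ≤ ∑ i ∈ Icc 1 m, ((q i : ℝ) + (n + 1) / 2) :=
        sum_le_sum fun i hi => factorial_mul_rpow_le (by omega) (hq i (mem_Icc.mp hi).1).1
      _ = Q m + (n + 1) / 2 * m := by
        rw [hQ, sum_add_distrib, sum_const, Nat.card_Icc, nsmul_eq_mul]; push_cast; ring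
  have hcoef : ((n : ℝ) + 1) / 2 ≤ (n + 3) / (2 * n + 2) * n := by
    rw [div_mul_eq_mul_div, le_div_iff₀ (by positivity)]; nlinarith
  rw [mul_assoc ((n ! : ℝ) ^ ((1 : ℝ) / n))]
  linarith [mul_le_mul_of_nonneg_right hcoef (Nat.cast_nonneg m : (0 : ℝ) ≤ m)]
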